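/- Progress for expressions in PolyVGR: if ⊢ Γ, IsOuter Γ, Γ ⊢ Σ : State, and Γ;Σ ⊢ e : ∃Γ'.(Σ';T'), then either IsValue e, or IsComm e, or there exists e' with e ↪ e'. -/

import Mathlib

set_option maxHeartbeats 1000000

inductive Label : Type
  | l1 | l2
deriving DecidableEq, Repr

mutual

/-- Kinds of PolyVGR. -/
inductive Kind : Type
  | type : Kind
  | session : Kind
  | state : Kind
  | shape : Kind
  | dom : Ty → Kind            -- Dom 𝕊, indexed by a shape
  | arr : Kind → Kind → Kind   -- arrow kinds

/-- Types of PolyVGR (including session types, shapes, domains, states). -/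
inductive Ty : Type
  | var : String → Ty
  | app : Ty → Ty → Ty
  | lam : String → Ty → Ty → Ty              -- λ(α : Dom 𝕊). T
  | all : String → Kind → Env → Ty → Ty      -- ∀(α:κ, C). T
  | arrT : Ty → Ty → Env → Ty → Ty → Ty      -- Σ₁;T₁ → ∃Γ'.(Σ₂;T₂)
  | chan : Ty → Ty                           -- Chan D
  | ap : Ty → Ty                             -- [S]
  | unit : Ty
  | pair : Ty → Ty → Ty
  | ssend : String → Ty → Ty → Ty → Ty → Ty  -- !(∃α:Dom 𝕊.(Σ;T)).S
  | srecv : String → Ty → Ty → Ty → Ty → Ty  -- ?(∃α:Dom 𝕊.(Σ;T)).S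
  | schoice : Ty → Ty → Ty                   -- ⊕(S₁,S₂)
  | sbranch : Ty → Ty → Ty                   -- &(S₁,S₂)
  | sEnd : Ty
  | dual : Ty → Ty
  | sh0 : Ty
  | sh1 : Ty
  | shpair : Ty → Ty → Ty
  | dzero : Ty
  | dmerge : Ty → Ty → Ty
  | dproj : Label → Ty → Ty
  | stEmpty : Ty
  | stBind : Ty → Ty → Ty                    -- D : S
  | stMerge : Ty → Ty → Ty                   -- Σ₁, Σ₂

/-- Type environments (also used for constraint lists). -/
inductive Env : Type
  | nil : Env
  | consVal : Env → String → Ty → Env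
  | consKind : Env → String → Kind → Env
  | consCstr : Env → Ty → Ty → Env           -- D₁ # D₂

end

def Label.pick : Label → Ty → Ty → Ty
  | .l1, t, _ => t
  | .l2, _, t => t

namespace Env

def append : Env → Env → Env
  | g, .nil => g
  | g, .consVal g' x t => .consVal (g.append g') x t
  | g, .consKind g' a k => .consKind (g.append g') a k
  | g, .consCstr g' d1 d2 => .consCstr (g.append g') d1 d2

/-- All names bound by the environment. -/
def boundNames : Env → List String
  | .nil => []
  | .consVal g x _ => x :: g.boundNames
  | .consKind g a _ => a :: g.boundNames
  | .consCstr g _ _ => g.boundNames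

/-- Names of domain-kinded type variables. -/
def domVars : Env → List String
  | .nil => []
  | .consVal g _ _ => g.domVars
  | .consKind g a (Kind.dom _) => a :: g.domVars
  | .consKind g _ _ => g.domVars
  | .consCstr g _ _ => g.domVars

/-- Is this an environment consisting only of domain-kinded bindings? -/
def isDomEnv : Env → Prop
  | .nil => True
  | .consKind g _ (Kind.dom _) => g.isDomEnv
  | _ => False

/-- Kinds kept by the restriction Γ|⁻. -/
def keepKind : Kind → Bool
  | .shape => true
  | .session => true
  | .arr (.dom _) .type => true
  | .arr (.dom _) .state => true
  | _ => false

/-- Context restriction Γ|⁻: remove value bindings, constraints, and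
    bindings of kinds Dom 𝕊, State, Type. -/
def restrictNonDom : Env → Env
  | .nil => .nil
  | .consVal g _ _ => g.restrictNonDom
  | .consCstr g _ _ => g.restrictNonDom
  | .consKind g a k =>
      if keepKind k then .consKind g.restrictNonDom a k else g.restrictNonDom

/-- Context restriction Γ|ᵈ: keep only domain-kinded bindings. -/
def restrictOnlyDom : Env → Env
  | .nil => .nil
  | .consVal g _ _ => g.restrictOnlyDom
  | .consCstr g _ _ => g.restrictOnlyDom
  | .consKind g a (Kind.dom s) => .consKind g.restrictOnlyDom a (Kind.dom s)
  | .consKind g _ _ => g.restrictOnlyDom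

def addCstrs (g : Env) (ps : List (String × String)) : Env :=
  ps.foldl (fun acc p => Env.consCstr acc (Ty.var p.1) (Ty.var p.2)) g

/-- Disjoint context extension Γ₁ ⋉ Γ₂. -/
def djE (g1 g2 : Env) : Env :=
  let d1 := g1.domVars
  let d2 := g2.domVars
  let c2 := (d2.product d2).filter (fun p => p.1 ≠ p.2)
  let c12 := d1.product d2
  addCstrs (addCstrs (g1.append g2) c2) c12

end Env

infixl:65 " ⋉ " => Env.djE

/-- Membership of a value binding in an environment. -/
inductive Env.MemVal : Env → String → Ty → Prop
  | here : Env.MemVal (.consVal g x t) x t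
  | skipVal : Env.MemVal g x t → Env.MemVal (.consVal g y s) x t
  | skipKind : Env.MemVal g x t → Env.MemVal (.consKind g a k) x t
  | skipCstr : Env.MemVal g x t → Env.MemVal (.consCstr g d1 d2) x t

/-- Membership of a kind binding in an environment. -/
inductive Env.MemKind : Env → String → Kind → Prop
  | here : Env.MemKind (.consKind g a k) a k
  | skipVal : Env.MemKind g a k → Env.MemKind (.consVal g y s) a k
  | skipKind : Env.MemKind g a k → Env.MemKind (.consKind g b k') a k
  | skipCstr : Env.MemKind g a k → Env.MemKind (.consCstr g d1 d2) a k

/-- Membership of a disjointness constraint in an environment. -/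
inductive Env.MemCstr : Env → Ty → Ty → Prop
  | here : Env.MemCstr (.consCstr g d1 d2) d1 d2
  | skipVal : Env.MemCstr g d1 d2 → Env.MemCstr (.consVal g y s) d1 d2
  | skipKind : Env.MemCstr g d1 d2 → Env.MemCstr (.consKind g b k') d1 d2
  | skipCstr : Env.MemCstr g d1 d2 → Env.MemCstr (.consCstr g d1' d2') d1 d2

/-- Domains bound in a state. -/
def stDoms : Ty → List Ty
  | .stBind d _ => [d]
  | .stMerge s1 s2 => stDoms s1 ++ stDoms s2
  | _ => []

/-- Constraint environment asserting disjointness of the domains of two states. -/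
def stDisjCstr (s1 s2 : Ty) : Env :=
  ((stDoms s1).product (stDoms s2)).foldl
    (fun g p => Env.consCstr g p.1 p.2) Env.nil

mutual

/-- Values (A-normal form). -/
inductive Val : Type
  | var : String → Val
  | chan : Ty → Val
  | unit : Val
  | pair : Val → Val → Val
  | lam : Ty → String → Ty → Exp → Val      -- λ(Σ; x:T). e
  | tlam : String → Kind → Env → Val → Val  -- Λ(α:κ, C). v

/-- Expressions (A-normal form). -/
inductive Exp : Type
  | val : Val → Exp
  | lete : String → Exp → Exp → Exp
  | app : Val → Val → Exp
  | proj : Label → Val → Exp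
  | tapp : Val → Ty → Exp
  | fork : Val → Exp
  | new : Ty → Exp
  | accept : Val → Exp
  | request : Val → Exp
  | send : Val → Val → Exp
  | recv : Val → Exp
  | select : Label → Val → Exp
  | ecase : Val → Exp → Exp → Exp
  | close : Val → Exp

end

def Label.pickE : Label → Exp → Exp → Exp
  | .l1, e, _ => e
  | .l2, _, e => e

def Label.pickV : Label → Val → Val → Val
  | .l1, v, _ => v
  | .l2, _, v => v

/-- Configurations. -/
inductive Conf : Type
  | exp : Exp → Conf
  | par : Conf → Conf → Conf
  | nuChan : String → String → Ty → Conf → Conf  -- (ν α α' : S) C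
  | nuAP : String → Ty → Conf → Conf             -- (ν x : [S]) C

/-- Evaluation contexts E ::= [] | let x = E in e. -/
inductive ECtx : Type
  | hole : ECtx
  | lete : String → ECtx → Exp → ECtx

def ECtx.fill : ECtx → Exp → Exp
  | .hole, e => e
  | .lete x E e2, e => .lete x (E.fill e) e2

/-- Configuration contexts 𝔽 ::= [] | (ν x y : S) 𝔽 | (ν x : [S]) 𝔽 | 𝔽 ∥ C. -/
inductive CCtx : Type
  | hole : CCtx
  | nuChan : String → String → Ty → CCtx → CCtx
  | nuAP : String → Ty → CCtx → CCtx
  | par : CCtx → Conf → CCtx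

def CCtx.fill : CCtx → Conf → Conf
  | .hole, c => c
  | .nuChan a b s F, c => .nuChan a b s (F.fill c)
  | .nuAP x s F, c => .nuAP x s (F.fill c)
  | .par F c2, c => .par (F.fill c) c2

mutual
def Kind.names : Kind → List String
  | .dom s => s.names
  | .arr k1 k2 => k1.names ++ k2.names
  | _ => []
def Ty.names : Ty → List String
  | .var a => [a]
  | .app t1 t2 => t1.names ++ t2.names
  | .lam a sh b => a :: (sh.names ++ b.names)
  | .all a k c b => a :: (k.names ++ c.names ++ b.names)
  | .arrT s1 t1 g s2 t2 => s1.names ++ t1.names ++ g.names ++ s2.names ++ t2.names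
  | .chan d => d.names
  | .ap s => s.names
  | .unit => []
  | .pair t1 t2 => t1.names ++ t2.names
  | .ssend a sh st t s => a :: (sh.names ++ st.names ++ t.names ++ s.names)
  | .srecv a sh st t s => a :: (sh.names ++ st.names ++ t.names ++ s.names)
  | .schoice s1 s2 => s1.names ++ s2.names
  | .sbranch s1 s2 => s1.names ++ s2.names
  | .sEnd => []
  | .dual s => s.names
  | .sh0 => []
  | .sh1 => []
  | .shpair s1 s2 => s1.names ++ s2.names
  | .dzero => []
  | .dmerge d1 d2 => d1.names ++ d2.names
  | .dproj _ d => d.names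
  | .stEmpty => []
  | .stBind d s => d.names ++ s.names
  | .stMerge s1 s2 => s1.names ++ s2.names
def Env.names : Env → List String
  | .nil => []
  | .consVal g x t => x :: (g.names ++ t.names)
  | .consKind g a k => a :: (g.names ++ k.names)
  | .consCstr g d1 d2 => g.names ++ d1.names ++ d2.names
end

mutual
def Val.names : Val → List String
  | .var x => [x]
  | .chan d => d.names
  | .unit => []
  | .pair v1 v2 => v1.names ++ v2.names
  | .lam st x t e => x :: (st.names ++ t.names ++ e.names)
  | .tlam a k c v => a :: (k.names ++ c.names ++ v.names)
def Exp.names : Exp → List String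
  | .val v => v.names
  | .lete x e1 e2 => x :: (e1.names ++ e2.names)
  | .app v1 v2 => v1.names ++ v2.names
  | .proj _ v => v.names
  | .tapp v t => v.names ++ t.names
  | .fork v => v.names
  | .new s => s.names
  | .accept v => v.names
  | .request v => v.names
  | .send v1 v2 => v1.names ++ v2.names
  | .recv v => v.names
  | .select _ v => v.names
  | .ecase v e1 e2 => v.names ++ e1.names ++ e2.names
  | .close v => v.names
end

def Conf.names : Conf → List String
  | .exp e => e.names
  | .par c1 c2 => c1.names ++ c2.names
  | .nuChan a b s c => a :: b :: (s.names ++ c.names)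
  | .nuAP x s c => x :: (s.names ++ c.names)

/-- Type-level substitutions. -/
def TSub := String → Ty

def TSub.upd (σ : TSub) (a : String) : TSub := fun b => if b = a then Ty.var b else σ b
def TSub.updMany (σ : TSub) (as_ : List String) : TSub :=
  fun b => if b ∈ as_ then Ty.var b else σ b
def TSub.id : TSub := Ty.var

mutual
def Kind.subst (σ : TSub) : Kind → Kind
  | .type => .type
  | .session => .session
  | .state => .state
  | .shape => .shape
  | .dom s => .dom (s.subst σ)
  | .arr k1 k2 => .arr (k1.subst σ) (k2.subst σ)
def Ty.subst (σ : TSub) : Ty → Ty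
  | .var a => σ a
  | .app t1 t2 => .app (t1.subst σ) (t2.subst σ)
  | .lam a sh b => .lam a (sh.subst σ) (b.subst (σ.upd a))
  | .all a k c b => .all a (k.subst σ) (c.subst (σ.upd a)) (b.subst (σ.upd a))
  | .arrT s1 t1 g s2 t2 =>
      .arrT (s1.subst σ) (t1.subst σ) (g.subst σ)
        (s2.subst (σ.updMany g.boundNames)) (t2.subst (σ.updMany g.boundNames))
  | .chan d => .chan (d.subst σ)
  | .ap s => .ap (s.subst σ)
  | .unit => .unit
  | .pair t1 t2 => .pair (t1.subst σ) (t2.subst σ)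
  | .ssend a sh st t s =>
      .ssend a (sh.subst σ) (st.subst (σ.upd a)) (t.subst (σ.upd a)) (s.subst σ)
  | .srecv a sh st t s =>
      .srecv a (sh.subst σ) (st.subst (σ.upd a)) (t.subst (σ.upd a)) (s.subst σ)
  | .schoice s1 s2 => .schoice (s1.subst σ) (s2.subst σ)
  | .sbranch s1 s2 => .sbranch (s1.subst σ) (s2.subst σ)
  | .sEnd => .sEnd
  | .dual s => .dual (s.subst σ)
  | .sh0 => .sh0
  | .sh1 => .sh1
  | .shpair s1 s2 => .shpair (s1.subst σ) (s2.subst σ)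
  | .dzero => .dzero
  | .dmerge d1 d2 => .dmerge (d1.subst σ) (d2.subst σ)
  | .dproj l d => .dproj l (d.subst σ)
  | .stEmpty => .stEmpty
  | .stBind d s => .stBind (d.subst σ) (s.subst σ)
  | .stMerge s1 s2 => .stMerge (s1.subst σ) (s2.subst σ)
def Env.subst (σ : TSub) : Env → Env
  | .nil => .nil
  | .consVal g x t => .consVal (g.subst σ) x (t.subst σ)
  | .consKind g a k => .consKind (g.subst σ) a (k.subst σ)
  | .consCstr g d1 d2 => .consCstr (g.subst σ) (d1.subst σ) (d2.subst σ)
end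

/-- Substitutions mapping value variables to values and type variables to types. -/
structure Subst where
  onVal : String → Val
  onTy : TSub

def Subst.id : Subst := ⟨Val.var, Ty.var⟩
def Subst.updV (σ : Subst) (x : String) : Subst :=
  ⟨fun y => if y = x then Val.var y else σ.onVal y, σ.onTy⟩
def Subst.updT (σ : Subst) (a : String) : Subst := ⟨σ.onVal, σ.onTy.upd a⟩
/-- (σ, x ↦ v) -/
def Subst.extV (σ : Subst) (x : String) (v : Val) : Subst :=
  ⟨fun y => if y = x then v else σ.onVal y, σ.onTy⟩
/-- (σ, α ↦ T) -/
def Subst.extT (σ : Subst) (a : String) (t : Ty) : Subst :=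
  ⟨σ.onVal, fun b => if b = a then t else σ.onTy b⟩
/-- (σ, id) on the names bound by Γ. -/
def Subst.extIdEnv (σ : Subst) (g : Env) : Subst :=
  ⟨fun y => if y ∈ g.boundNames then Val.var y else σ.onVal y,
   fun b => if b ∈ g.boundNames then Ty.var b else σ.onTy b⟩

mutual
def Val.subst (σ : Subst) : Val → Val
  | .var x => σ.onVal x
  | .chan d => .chan (d.subst σ.onTy)
  | .unit => .unit
  | .pair v1 v2 => .pair (v1.subst σ) (v2.subst σ)
  | .lam st x t e => .lam (st.subst σ.onTy) x (t.subst σ.onTy) (e.subst (σ.updV x))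
  | .tlam a k c v => .tlam a (k.subst σ.onTy) (c.subst σ.onTy) (v.subst (σ.updT a))
def Exp.subst (σ : Subst) : Exp → Exp
  | .val v => .val (v.subst σ)
  | .lete x e1 e2 => .lete x (e1.subst σ) (e2.subst (σ.updV x))
  | .app v1 v2 => .app (v1.subst σ) (v2.subst σ)
  | .proj l v => .proj l (v.subst σ)
  | .tapp v t => .tapp (v.subst σ) (t.subst σ.onTy)
  | .fork v => .fork (v.subst σ)
  | .new s => .new (s.subst σ.onTy)
  | .accept v => .accept (v.subst σ)
  | .request v => .request (v.subst σ)
  | .send v1 v2 => .send (v1.subst σ) (v2.subst σ)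
  | .recv v => .recv (v.subst σ)
  | .select l v => .select l (v.subst σ)
  | .ecase v e1 e2 => .ecase (v.subst σ) (e1.subst σ) (e2.subst σ)
  | .close v => .close (v.subst σ)
end

/-- Single type-variable substitution [t/a]. -/
def tsub1 (a : String) (t : Ty) : TSub := fun b => if b = a then t else Ty.var b
def Ty.subst1 (tgt : Ty) (a : String) (t : Ty) : Ty := tgt.subst (tsub1 a t)
def Env.subst1 (g : Env) (a : String) (t : Ty) : Env := g.subst (tsub1 a t)
def Exp.substV1 (e : Exp) (x : String) (v : Val) : Exp :=
  e.subst ⟨fun y => if y = x then v else Val.var y, Ty.var⟩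
def Val.substT1 (w : Val) (a : String) (t : Ty) : Val := w.subst ⟨Val.var, tsub1 a t⟩

mutual

/-- Context formation ⊢ Γ. -/
inductive CtxWf : Env → Prop
  | nil : CtxWf .nil
  | consKind : CtxWf g → KindWf g k → a ∉ g.boundNames → CtxWf (.consKind g a k)
  | consVal : CtxWf g → HasKind g t .type → x ∉ g.boundNames → CtxWf (.consVal g x t)
  | consCstr : CtxWf g → HasKind g d1 (.dom s1) → HasKind g d2 (.dom s2) →
      CtxWf (.consCstr g d1 d2)

/-- Kind formation Γ ⊢ κ. -/
inductive KindWf : Env → Kind → Prop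
  | type : KindWf g .type
  | session : KindWf g .session
  | state : KindWf g .state
  | shape : KindWf g .shape
  | dom : HasKind g s .shape → KindWf g (.dom s)
  | arr : KindWf g k1 → KindWf g k2 → KindWf g (.arr k1 k2)

/-- Kinding Γ ⊢ T : κ. -/
inductive HasKind : Env → Ty → Kind → Prop
  | var : Env.MemKind g a k → HasKind g (.var a) k
  | app : HasKind g t1 (.arr k1 k2) → HasKind g t2 k1 → HasKind g (.app t1 t2) k2
  | lam : HasKind g sh .shape →
      HasKind (.consKind g.restrictNonDom a (.dom sh)) body k →
      (k = .type ∨ k = .state) →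
      HasKind g (.lam a sh body) (.arr (.dom sh) k)
  | all : CtxWf ((Env.consKind g a k).append c) →
      HasKind ((Env.consKind g a k).append c) body .type →
      HasKind g (.all a k c body) .type
  | arrT : HasKind g st1 .state → HasKind g t1 .type →
      g2.isDomEnv → CtxWf (g ⋉ g2) →
      HasKind (g ⋉ g2) st2 .state → HasKind (g ⋉ g2) t2 .type →
      HasKind g (.arrT st1 t1 g2 st2 t2) .type
  | chan : HasKind g d (.dom .sh1) → HasKind g (.chan d) .type
  | ap : HasKind g s .session → HasKind g (.ap s) .type
  | unit : HasKind g .unit .type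
  | pair : HasKind g t1 .type → HasKind g t2 .type → HasKind g (.pair t1 t2) .type
  | ssend : HasKind g sh .shape →
      HasKind (.consKind g.restrictNonDom a (.dom sh)) st .state →
      HasKind (.consKind g.restrictNonDom a (.dom sh)) t .type →
      HasKind g s .session →
      HasKind g (.ssend a sh st t s) .session
  | srecv : HasKind g sh .shape →
      HasKind (.consKind g.restrictNonDom a (.dom sh)) st .state →
      HasKind (.consKind g.restrictNonDom a (.dom sh)) t .type →
      HasKind g s .session →
      HasKind g (.srecv a sh st t s) .session
  | schoice : HasKind g s1 .session → HasKind g s2 .session →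
      HasKind g (.schoice s1 s2) .session
  | sbranch : HasKind g s1 .session → HasKind g s2 .session →
      HasKind g (.sbranch s1 s2) .session
  | sEnd : HasKind g .sEnd .session
  | dual : HasKind g s .session → HasKind g (.dual s) .session
  | sh0 : HasKind g .sh0 .shape
  | sh1 : HasKind g .sh1 .shape
  | shpair : HasKind g s1 .shape → HasKind g s2 .shape →
      HasKind g (.shpair s1 s2) .shape
  | dzero : HasKind g .dzero (.dom .sh0)
  | dmerge : HasKind g d1 (.dom s1) → HasKind g d2 (.dom s2) →
      EntailsD g d1 d2 → HasKind g (.dmerge d1 d2) (.dom (.shpair s1 s2))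
  | dproj : HasKind g d (.dom (.shpair s1 s2)) →
      HasKind g (.dproj l d) (.dom (Label.pick l s1 s2))
  | stEmpty : HasKind g .stEmpty .state
  | stBind : HasKind g d (.dom .sh1) → HasKind g s .session →
      HasKind g (.stBind d s) .state
  | stMerge : HasKind g s1 .state → HasKind g s2 .state →
      Entails g (stDisjCstr s1 s2) → HasKind g (.stMerge s1 s2) .state

/-- Constraint entailment for a single disjointness Γ ⊨ D₁ # D₂. -/
inductive EntailsD : Env → Ty → Ty → Prop
  | ax : Env.MemCstr g d1 d2 → EntailsD g d1 d2
  | symm : EntailsD g d1 d2 → EntailsD g d2 d1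
  | zero : EntailsD g .dzero d
  | merge : EntailsD g d1 d → EntailsD g d2 d → EntailsD g (.dmerge d1 d2) d
  | split1 : EntailsD g (.dmerge d1 d2) d → EntailsD g d1 d
  | split2 : EntailsD g (.dmerge d1 d2) d → EntailsD g d2 d
  | projMerge : EntailsD g (.dproj .l1 d) (.dproj .l2 d)
  | projSplit : EntailsD g d1 d2 → EntailsD g (.dproj l d1) d2

/-- Constraint entailment Γ ⊨ C. -/
inductive Entails : Env → Env → Prop
  | nil : Entails g .nil
  | cons : Entails g c → EntailsD g d1 d2 → Entails g (.consCstr c d1 d2)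

end

/-- Type conversion T ≡ T'. -/
inductive TyConv : Ty → Ty → Prop
  | refl : TyConv t t
  | symm : TyConv t1 t2 → TyConv t2 t1
  | trans : TyConv t1 t2 → TyConv t2 t3 → TyConv t1 t3
  | beta : TyConv (.app (.lam a sh body) d) (body.subst1 a d)
  | projPair : TyConv (.dproj l (.dmerge d1 d2)) (Label.pick l d1 d2)
  | dualEnd : TyConv (.dual .sEnd) .sEnd
  | dualDual : TyConv (.dual (.dual s)) s
  | dualSend : TyConv (.dual (.ssend a sh st t s)) (.srecv a sh st t (.dual s))
  | dualRecv : TyConv (.dual (.srecv a sh st t s)) (.ssend a sh st t (.dual s))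
  | dualChoice : TyConv (.dual (.schoice s1 s2)) (.sbranch (.dual s1) (.dual s2))
  | dualBranch : TyConv (.dual (.sbranch s1 s2)) (.schoice (.dual s1) (.dual s2))
  -- congruence
  | capp : TyConv t1 t1' → TyConv t2 t2' → TyConv (.app t1 t2) (.app t1' t2')
  | clam : TyConv sh sh' → TyConv b b' → TyConv (.lam a sh b) (.lam a sh' b')
  | call : TyConv b b' → TyConv (.all a k c b) (.all a k c b')
  | carrT : TyConv s1 s1' → TyConv t1 t1' → TyConv s2 s2' → TyConv t2 t2' →
      TyConv (.arrT s1 t1 g s2 t2) (.arrT s1' t1' g s2' t2')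
  | cchan : TyConv d d' → TyConv (.chan d) (.chan d')
  | cap : TyConv s s' → TyConv (.ap s) (.ap s')
  | cpair : TyConv t1 t1' → TyConv t2 t2' → TyConv (.pair t1 t2) (.pair t1' t2')
  | cssend : TyConv sh sh' → TyConv st st' → TyConv t t' → TyConv s s' →
      TyConv (.ssend a sh st t s) (.ssend a sh' st' t' s')
  | csrecv : TyConv sh sh' → TyConv st st' → TyConv t t' → TyConv s s' →
      TyConv (.srecv a sh st t s) (.srecv a sh' st' t' s')
  | cschoice : TyConv s1 s1' → TyConv s2 s2' → TyConv (.schoice s1 s2) (.schoice s1' s2')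
  | csbranch : TyConv s1 s1' → TyConv s2 s2' → TyConv (.sbranch s1 s2) (.sbranch s1' s2')
  | cdual : TyConv s s' → TyConv (.dual s) (.dual s')
  | cshpair : TyConv s1 s1' → TyConv s2 s2' → TyConv (.shpair s1 s2) (.shpair s1' s2')
  | cdmerge : TyConv d1 d1' → TyConv d2 d2' → TyConv (.dmerge d1 d2) (.dmerge d1' d2')
  | cdproj : TyConv d d' → TyConv (.dproj l d) (.dproj l d')
  | cstBind : TyConv d d' → TyConv s s' → TyConv (.stBind d s) (.stBind d' s')
  | cstMerge : TyConv s1 s1' → TyConv s2 s2' → TyConv (.stMerge s1 s2) (.stMerge s1' s2')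

mutual

/-- Value typing Γ ⊢ v : T. -/
inductive ValTy : Env → Val → Ty → Prop
  | var : Env.MemVal g x t → ValTy g (.var x) t
  | unit : ValTy g .unit .unit
  | pair : ValTy g v1 t1 → ValTy g v2 t2 → ValTy g (.pair v1 v2) (.pair t1 t2)
  | chan : HasKind g d (.dom .sh1) → ValTy g (.chan d) (.chan d)
  | lam : HasKind g (.arrT st1 t1 g2 st2 t2) .type →
      ExpTy (.consVal g x t1) st1 e g2 st2 t2 →
      ValTy g (.lam st1 x t1 e) (.arrT st1 t1 g2 st2 t2)
  | tlam : HasKind g (.all a k c t) .type →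
      ValTy ((Env.consKind g a k).append c) v t →
      ValTy g (.tlam a k c v) (.all a k c t)

/-- Expression typing Γ₁;Σ₁ ⊢ e : ∃Γ₂.(Σ₂;T). -/
inductive ExpTy : Env → Ty → Exp → Env → Ty → Ty → Prop
  | val : ValTy g v t → ExpTy g st (.val v) .nil st t
  | lete : ExpTy g st1 e1 g2 st2' t1 →
      ExpTy (Env.consVal (g ⋉ g2) x t1) (.stMerge st2 st2') e2 g3 st3 t2 →
      HasKind (Env.consVal (g ⋉ g2) x t1) (.stMerge st2 st2') .state →
      ExpTy g (.stMerge st1 st2) (.lete x e1 e2) (g2.append g3) st3 t2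
  | app : ValTy g v1 (.arrT st1 t1 g2 st2 t2) → ValTy g v2 t1 →
      ExpTy g st1 (.app v1 v2) g2 st2 t2
  | proj : ValTy g v (.pair t1 t2) →
      ExpTy g .stEmpty (.proj l v) .nil .stEmpty (Label.pick l t1 t2)
  | tapp : ValTy g v (.all a k c t) → HasKind g t' k →
      Entails g (c.subst1 a t') → TyConv (t.subst1 a t') t'' →
      ExpTy g .stEmpty (.tapp v t') .nil .stEmpty t''
  | new : HasKind g s .session → ExpTy g .stEmpty (.new s) .nil .stEmpty (.ap s)
  | request : ValTy g v (.ap s) → a ∉ g.boundNames →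
      ExpTy g .stEmpty (.request v)
        (.consKind .nil a (.dom .sh1)) (.stBind (.var a) s) (.chan (.var a))
  | accept : ValTy g v (.ap s) → a ∉ g.boundNames →
      ExpTy g .stEmpty (.accept v)
        (.consKind .nil a (.dom .sh1)) (.stBind (.var a) (.dual s)) (.chan (.var a))
  | send : HasKind g d' (.dom sh) →
      TyConv (st'.subst1 a d') st1 →
      TyConv (t'.subst1 a d') t →
      ValTy g v1 t → ValTy g v2 (.chan d) →
      ExpTy g (.stMerge st1 (.stBind d (.ssend a sh st' t' s)))
        (.send v1 v2) .nil (.stBind d s) .unit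
  | recv : ValTy g v (.chan d) → a ∉ g.boundNames →
      ExpTy g (.stBind d (.srecv a sh st' t' s)) (.recv v)
        (.consKind .nil a (.dom sh)) (.stMerge st' (.stBind d s)) t'
  | fork : ValTy g v (.arrT st .unit .nil .stEmpty .unit) →
      ExpTy g st (.fork v) .nil .stEmpty .unit
  | close : ValTy g v (.chan d) →
      ExpTy g (.stBind d .sEnd) (.close v) .nil .stEmpty .unit
  | select : ValTy g v (.chan d) →
      ExpTy g (.stBind d (.schoice s1 s2)) (.select l v) .nil
        (.stBind d (Label.pick l s1 s2)) .unit
  | ecase : ValTy g v (.chan d) →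
      ExpTy g (.stMerge st (.stBind d s1)) e1 g' st' t →
      ExpTy g (.stMerge st (.stBind d s2)) e2 g' st' t →
      ExpTy g (.stMerge st (.stBind d (.sbranch s1 s2))) (.ecase v e1 e2) g' st' t

end

/-- Configuration typing Γ;Σ ⊢ C. -/
inductive ConfTy : Env → Ty → Conf → Prop
  | exp : ExpTy g st e g' .stEmpty t → ConfTy g st (.exp e)
  | par : ConfTy g st1 c1 → ConfTy g st2 c2 → ConfTy g (.stMerge st1 st2) (.par c1 c2)
  | nuChan : a ∉ g.names → b ∉ g.names → a ≠ b →
      HasKind g s .session →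
      ConfTy ((g ⋉ (Env.consKind .nil a (.dom .sh1))) ⋉ (Env.consKind .nil b (.dom .sh1)))
        (.stMerge st (.stMerge (.stBind (.var a) s) (.stBind (.var b) (.dual s)))) c →
      ConfTy g st (.nuChan a b s c)
  | nuChanClosed : a ∉ g.names → b ∉ g.names → a ≠ b →
      ConfTy ((g ⋉ (Env.consKind .nil a (.dom .sh1))) ⋉ (Env.consKind .nil b (.dom .sh1))) st c →
      ConfTy g st (.nuChan a b .sEnd c)
  | nuAP : x ∉ g.names → HasKind g s .session →
      ConfTy (.consVal g x (.ap s)) st c →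
      ConfTy g st (.nuAP x s c)

/-- Expression reduction e ↪ e'. -/
inductive ExpRed : Exp → Exp → Prop
  | betaFun : ExpRed (.app (.lam st x t e) v) (e.substV1 x v)
  | betaPair : ExpRed (.proj l (.pair v1 v2)) (.val (Label.pickV l v1 v2))
  | betaAll : ExpRed (.tapp (.tlam a k c v) t) (.val (v.substT1 a t))
  | betaLet : ExpRed (.lete x (.val v) e) (e.substV1 x v)
  | lift : ExpRed e e' → ExpRed (.lete x e e2) (.lete x e' e2)

/-- Configuration congruence C ≅ C'. -/
inductive Cong : Conf → Conf → Prop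
  | refl : Cong c c
  | symm : Cong c1 c2 → Cong c2 c1
  | trans : Cong c1 c2 → Cong c2 c3 → Cong c1 c3
  | null : Cong (.par c (.exp (.val .unit))) c
  | comm : Cong (.par c1 c2) (.par c2 c1)
  | assoc : Cong (.par (.par c1 c2) c3) (.par c1 (.par c2 c3))
  | swap : Cong (.nuChan a b s c) (.nuChan b a (.dual s) c)
  | scopeChan : a ∉ c2.names → b ∉ c2.names →
      Cong (.par (.nuChan a b s c1) c2) (.nuChan a b s (.par c1 c2))
  | scopeAP : x ∉ c2.names →
      Cong (.par (.nuAP x s c1) c2) (.nuAP x s (.par c1 c2))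
  | parL : Cong c1 c1' → Cong (.par c1 c2) (.par c1' c2)
  | cnuChan : Cong c c' → Cong (.nuChan a b s c) (.nuChan a b s c')
  | cnuAP : Cong c c' → Cong (.nuAP x s c) (.nuAP x s c')

/-- Configuration reduction C ↪ C'. -/
inductive ConfRed : Conf → Conf → Prop
  | expr : ExpRed e e' → ConfRed (.exp e) (.exp e')
  | fork : ConfRed (.exp (ECtx.fill E (.fork v)))
      (.par (.exp (.app v .unit)) (.exp (ECtx.fill E (.val .unit))))
  | new : x ∉ (ECtx.fill E (Exp.new s)).names →
      ConfRed (.exp (ECtx.fill E (.new s)))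
        (.nuAP x s (.exp (ECtx.fill E (.val (.var x)))))
  | requestAccept :
      Cong c (.par (.par (.exp (ECtx.fill E1 (.request (.var x))))
                         (.exp (ECtx.fill E2 (.accept (.var x))))) c') →
      a ∉ c.names → b ∉ c.names → a ≠ b →
      ConfRed (.nuAP x s c)
        (.nuAP x s (.nuChan a b s
          (.par (.par (.exp (ECtx.fill E1 (.val (.chan (.var a)))))
                      (.exp (ECtx.fill E2 (.val (.chan (.var b)))))) c')))
  | sendRecv :
      Cong c (.par (.par (.exp (ECtx.fill E1 (.send v (.chan (.var a)))))
                         (.exp (ECtx.fill E2 (.recv (.chan (.var b)))))) c') →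
      ConfRed (.nuChan a b (.ssend a' sh st t s) c)
        (.nuChan a b s
          (.par (.par (.exp (ECtx.fill E1 (.val .unit)))
                      (.exp (ECtx.fill E2 (.val v)))) c'))
  | selectCase :
      Cong c (.par (.par (.exp (ECtx.fill E1 (.select l (.chan (.var a)))))
                         (.exp (ECtx.fill E2 (.ecase (.chan (.var b)) e1 e2)))) c') →
      ConfRed (.nuChan a b (.schoice s1 s2) c)
        (.nuChan a b (Label.pick l s1 s2)
          (.par (.par (.exp (ECtx.fill E1 (.val .unit)))
                      (.exp (ECtx.fill E2 (Label.pickE l e1 e2)))) c'))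
  | close :
      Cong c (.par (.par (.exp (ECtx.fill E1 (.close (.chan (.var a)))))
                         (.exp (ECtx.fill E2 (.close (.chan (.var b)))))) c') →
      ConfRed (.nuChan a b .sEnd c)
        (.nuChan a b .sEnd
          (.par (.par (.exp (ECtx.fill E1 (.val .unit)))
                      (.exp (ECtx.fill E2 (.val .unit)))) c'))
  | lift : ConfRed c c' → ConfRed (CCtx.fill F c) (CCtx.fill F c')

/-- IsValue e: e is a syntactic value. -/
def IsValue (e : Exp) : Prop := ∃ v, e = Exp.val v

/-- IsComm e: e is stuck on a communication (or fork). -/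
inductive IsComm : Exp → Prop
  | fork : IsComm (.fork (.lam st x t e))
  | new : IsComm (.new s)
  | accept : IsComm (.accept v)
  | request : IsComm (.request v)
  | send : IsComm (.send v (.chan d))
  | recv : IsComm (.recv (.chan d))
  | select : IsComm (.select l (.chan d))
  | ecase : IsComm (.ecase (.chan d) e1 e2)
  | close : IsComm (.close (.chan d))
  | lete : IsComm e1 → IsComm (.lete x e1 e2)

/-- IsOuter Γ: Γ binds only kinds, constraints, and access points. -/
inductive IsOuter : Env → Prop
  | nil : IsOuter .nil
  | kind : IsOuter g → IsOuter (.consKind g a k)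
  | ap : IsOuter g → IsOuter (.consVal g x (.ap s))
  | cstr : IsOuter g → IsOuter (.consCstr g d1 d2)

/-- IsFinal C: all processes are values, all channels concluded. -/
inductive IsFinal : Conf → Prop
  | val : IsFinal (.exp (.val v))
  | par : IsFinal c1 → IsFinal c2 → IsFinal (.par c1 c2)
  | nuAP : IsFinal c → IsFinal (.nuAP x s c)
  | nuChan : IsFinal c → IsFinal (.nuChan a b .sEnd c)

/-- IsDeadlock C. -/
def IsDeadlock (c : Conf) : Prop :=
  (∀ (F : CCtx) (e : Exp), c = CCtx.fill F (.exp e) →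
     (IsValue e ∨ (IsComm e ∧ (∀ v, e ≠ .fork v) ∧ (∀ s, e ≠ .new s)))) ∧
  (∀ (F : CCtx) (x : String) (s : Ty) (c' : Conf), c = CCtx.fill F (.nuAP x s c') →
     ((∀ (F1 : CCtx) (E1 : ECtx),
         c' = CCtx.fill F1 (.exp (ECtx.fill E1 (.request (.var x)))) →
         ¬ ∃ (F2 : CCtx) (E2 : ECtx),
             c' = CCtx.fill F2 (.exp (ECtx.fill E2 (.accept (.var x))))) ∧
      (∀ (F1 : CCtx) (E1 : ECtx),
         c' = CCtx.fill F1 (.exp (ECtx.fill E1 (.accept (.var x)))) →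
         ¬ ∃ (F2 : CCtx) (E2 : ECtx),
             c' = CCtx.fill F2 (.exp (ECtx.fill E2 (.request (.var x))))))) ∧
  (∀ (F : CCtx) (a1 a2 : String) (s : Ty) (c' : Conf),
     c = CCtx.fill F (.nuChan a1 a2 s c') →
     ∀ (b d : String), ((b = a1 ∧ d = a2) ∨ (b = a2 ∧ d = a1)) →
       ((∀ (F1 : CCtx) (E1 : ECtx) (v : Val),
           c' = CCtx.fill F1 (.exp (ECtx.fill E1 (.send v (.chan (.var b))))) →
           ¬ ∃ (F2 : CCtx) (E2 : ECtx),
               c' = CCtx.fill F2 (.exp (ECtx.fill E2 (.recv (.chan (.var d)))))) ∧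
        (∀ (F1 : CCtx) (E1 : ECtx),
           c' = CCtx.fill F1 (.exp (ECtx.fill E1 (.recv (.chan (.var b))))) →
           ¬ ∃ (F2 : CCtx) (E2 : ECtx) (v : Val),
               c' = CCtx.fill F2 (.exp (ECtx.fill E2 (.send v (.chan (.var d)))))) ∧
        (∀ (F1 : CCtx) (E1 : ECtx) (l : Label),
           c' = CCtx.fill F1 (.exp (ECtx.fill E1 (.select l (.chan (.var b))))) →
           ¬ ∃ (F2 : CCtx) (E2 : ECtx) (e1 e2 : Exp),
               c' = CCtx.fill F2 (.exp (ECtx.fill E2 (.ecase (.chan (.var d)) e1 e2)))) ∧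
        (∀ (F1 : CCtx) (E1 : ECtx) (e1 e2 : Exp),
           c' = CCtx.fill F1 (.exp (ECtx.fill E1 (.ecase (.chan (.var b)) e1 e2))) →
           ¬ ∃ (F2 : CCtx) (E2 : ECtx) (l : Label),
               c' = CCtx.fill F2 (.exp (ECtx.fill E2 (.select l (.chan (.var d)))))) ∧
        (∀ (F1 : CCtx) (E1 : ECtx),
           c' = CCtx.fill F1 (.exp (ECtx.fill E1 (.close (.chan (.var b))))) →
           ¬ ∃ (F2 : CCtx) (E2 : ECtx),
               c' = CCtx.fill F2 (.exp (ECtx.fill E2 (.close (.chan (.var d))))))))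

/-- Order-preserving embedding Γ₁ ≼ Γ₂. -/
def OPE (g1 g2 : Env) : Prop :=
  CtxWf g1 ∧ CtxWf g2 ∧
  (∀ x t, Env.MemVal g1 x t → Env.MemVal g2 x t) ∧
  (∀ a k, Env.MemKind g1 a k → Env.MemKind g2 a k) ∧
  (∀ d1 d2, Env.MemCstr g1 d1 d2 → Env.MemCstr g2 d1 d2)

/-- Substitution typing ⊢ σ : Γ₁ ⇒ Γ₂. -/
def SubstTyped (σ : Subst) (g1 g2 : Env) : Prop :=
  CtxWf g1 ∧ CtxWf g2 ∧
  (∀ x t, Env.MemVal g1 x t → ValTy g2 (σ.onVal x) (t.subst σ.onTy)) ∧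
  (∀ a k, Env.MemKind g1 a k → HasKind g2 (σ.onTy a) (k.subst σ.onTy)) ∧
  (∀ d1 d2, Env.MemCstr g1 d1 d2 → EntailsD g2 (d1.subst σ.onTy) (d2.subst σ.onTy))

theorem IsOuter.memVal_eq_ap {g : Env} {x : String} {t : Ty}
    (houter : IsOuter g) (hmem : Env.MemVal g x t) : ∃ s, t = .ap s := by
  induction hmem with
  | here => cases houter with | ap _ => exact ⟨_, rfl⟩
  | skipVal _ ih => cases houter with | ap h => exact ih h
  | skipKind _ ih => cases houter with | kind h => exact ih h
  | skipCstr _ ih => cases houter with | cstr h => exact ih h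

/-! Canonical forms: in an outer environment only access points are variables, so a value of
function, pair, polymorphic or channel type is an introduction form. -/

section CanonicalForms

variable {g : Env} {v : Val}

theorem ValTy.exists_eq_lam {st1 t1 st2 t2 : Ty} {g2 : Env} (houter : IsOuter g)
    (hv : ValTy g v (.arrT st1 t1 g2 st2 t2)) : ∃ x e, v = .lam st1 x t1 e := by
  cases hv with
  | var hmem => obtain ⟨_, ⟨⟩⟩ := houter.memVal_eq_ap hmem
  | lam _ _ => exact ⟨_, _, rfl⟩

theorem ValTy.exists_eq_pair {t1 t2 : Ty} (houter : IsOuter g)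
    (hv : ValTy g v (.pair t1 t2)) : ∃ v1 v2, v = .pair v1 v2 := by
  cases hv with
  | var hmem => obtain ⟨_, ⟨⟩⟩ := houter.memVal_eq_ap hmem
  | pair _ _ => exact ⟨_, _, rfl⟩

theorem ValTy.exists_eq_tlam {a : String} {k : Kind} {c : Env} {t : Ty} (houter : IsOuter g)
    (hv : ValTy g v (.all a k c t)) : ∃ w, v = .tlam a k c w := by
  cases hv with
  | var hmem => obtain ⟨_, ⟨⟩⟩ := houter.memVal_eq_ap hmem
  | tlam _ _ => exact ⟨_, rfl⟩

theorem ValTy.eq_chan {d : Ty} (houter : IsOuter g) (hv : ValTy g v (.chan d)) :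
    v = .chan d := by
  cases hv with
  | var hmem => obtain ⟨_, ⟨⟩⟩ := houter.memVal_eq_ap hmem
  | chan _ => rfl

end CanonicalForms

theorem ExpTy.progress {g : Env} {st : Ty} {e : Exp} {g' : Env} {st' t' : Ty}
    (hty : ExpTy g st e g' st' t') (houter : IsOuter g) :
    IsValue e ∨ IsComm e ∨ ∃ e', ExpRed e e' := by
  match hty with
  | .val _ => exact .inl ⟨_, rfl⟩
  | .lete h1 _ _ =>
    -- Only the header is evaluated; the body, typed under the non-outer `x : T₁`, is never inspected.
    rcases h1.progress houter with ⟨v, rfl⟩ | hc | ⟨e', hr⟩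
    · exact .inr (.inr ⟨_, .betaLet⟩)
    · exact .inr (.inl hc.lete)
    · exact .inr (.inr ⟨_, hr.lift⟩)
  | .app hv _ =>
    obtain ⟨_, _, rfl⟩ := hv.exists_eq_lam houter
    exact .inr (.inr ⟨_, .betaFun⟩)
  | .proj hv =>
    obtain ⟨_, _, rfl⟩ := hv.exists_eq_pair houter
    exact .inr (.inr ⟨_, .betaPair⟩)
  | .tapp hv _ _ _ =>
    obtain ⟨_, rfl⟩ := hv.exists_eq_tlam houter
    exact .inr (.inr ⟨_, .betaAll⟩)
  | .fork hv =>
    obtain ⟨_, _, rfl⟩ := hv.exists_eq_lam houter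
    exact .inr (.inl .fork)
  | .new _ => exact .inr (.inl .new)
  | .request _ _ => exact .inr (.inl .request)
  | .accept _ _ => exact .inr (.inl .accept)
  | .send _ _ _ _ hv => rw [hv.eq_chan houter]; exact .inr (.inl .send)
  | .recv hv _ => rw [hv.eq_chan houter]; exact .inr (.inl .recv)
  | .close hv => rw [hv.eq_chan houter]; exact .inr (.inl .close)
  | .select hv => rw [hv.eq_chan houter]; exact .inr (.inl .select)
  | .ecase hv _ _ => rw [hv.eq_chan houter]; exact .inr (.inl .ecase)

/-- Progress for expressions in PolyVGR. -/
theorem progress_expressions (g : Env) (st : Ty) (e : Exp)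
    (g' : Env) (st' t' : Ty)
    (hctx : CtxWf g) (houter : IsOuter g) (hst : HasKind g st Kind.state)
    (hty : ExpTy g st e g' st' t') :
    IsValue e ∨ IsComm e ∨ ∃ e', ExpRed e e' :=
  hty.progress houter
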